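/- Let (Ω, μ) be a probability space, H a real inner product space, T a positive integer, and g₁, …, g_T : Ω → H square-integrable random vectors that are pairwise L²-orthogonal (E[⟨g_s, g_t⟩] = 0 for s ≠ t) and satisfy E[‖g_t‖²] ≤ G² for every t, where G ≥ 0. Let R : Ω → ℝ be square-integrable and independent of the tuple (g₁, …, g_T). Let S ⊆ {1, …, T} be a subset with |S| = k, and let a₁, …, a_T be real allocation weights with 0 ≤ a_t ≤ 1 for all t and a_t = 0 for every t ∉ S. Then the allocated estimator X := R · ∑_{t=1}^T a_t g_t satisfies Var[X] := E[‖X‖²] − ‖E[X]‖² ≤ k · G² · E[R²]. -/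

import Mathlib

open MeasureTheory ProbabilityTheory
open scoped RealInnerProductSpace

/-!
Independence factors the second moment, `E‖R • Y‖² = E[R²] · E‖Y‖²` with `Y = ∑ a t • g t`,
and L²-orthogonality of the `g t` (Pythagoras) gives `E‖Y‖² = ∑ (a t)² E‖g t‖²`. Only the `k`
weights on `S` are nonzero and each is at most `1`, so `E‖Y‖² ≤ k G²`; the variance is at most
the second moment.
-/

section Independence

variable {Ω : Type*} {mΩ : MeasurableSpace Ω} {μ : Measure Ω}

lemma ProbabilityTheory.IndepFun.of_measurable_comap_right {β γ δ : Type*}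
    {mβ : MeasurableSpace β} {mγ : MeasurableSpace γ} {mδ : MeasurableSpace δ}
    {f : Ω → β} {g : Ω → γ} {h : Ω → δ}
    (hfg : IndepFun f g μ) (hh : Measurable[mγ.comap g] h) : IndepFun f h μ := by
  rw [IndepFun_iff] at hfg ⊢
  exact fun t₁ t₂ ht₁ ht₂ => hfg t₁ t₂ ht₁ (hh.comap_le _ ht₂)

lemma MeasureTheory.StronglyMeasurable.comap_tuple {ι E : Type*} [TopologicalSpace E]
    [TopologicalSpace.PseudoMetrizableSpace E] [MeasurableSpace E] [BorelSpace E] {g : ι → Ω → E}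
    (hg : ∀ i, StronglyMeasurable (g i)) (i : ι) :
    StronglyMeasurable[MeasurableSpace.comap (fun ω j => g j ω) MeasurableSpace.pi] (g i) :=
  stronglyMeasurable_iff_measurable_separable.2
    ⟨(measurable_pi_apply i).comp (comap_measurable fun ω j => g j ω), (hg i).isSeparable_range⟩

variable {ι H : Type*} [Fintype ι] [NormedAddCommGroup H] [NormedSpace ℝ H]
  [MeasurableSpace H] [BorelSpace H]

/- `H` need not be second countable, so `x ↦ ∑ a i • x i` may fail to be measurable for the
product σ-algebra on `ι → H`; strong measurability of the `g i` is what makes the sum measurable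
with respect to the σ-algebra generated by the tuple. -/
lemma ProbabilityTheory.IndepFun.sum_smul_right {β : Type*} {mβ : MeasurableSpace β}
    {R : Ω → β} {g : ι → Ω → H} (hg : ∀ i, StronglyMeasurable (g i))
    (hindep : IndepFun R (fun ω i => g i ω) μ) (a : ι → ℝ) :
    IndepFun R (fun ω => ∑ i, a i • g i ω) μ :=
  hindep.of_measurable_comap_right <| StronglyMeasurable.measurable <|
    Finset.stronglyMeasurable_fun_sum Finset.univ
      fun i _ => (StronglyMeasurable.comap_tuple hg i).const_smul (a i)

lemma integral_norm_smul_sum_sq_of_indepFun {g : ι → Ω → H}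
    (hg : ∀ i, AEStronglyMeasurable (g i) μ) {R : Ω → ℝ} (hR : AEStronglyMeasurable R μ)
    (hindep : IndepFun R (fun ω i => g i ω) μ) (a : ι → ℝ) :
    ∫ ω, ‖R ω • ∑ i, a i • g i ω‖ ^ 2 ∂μ
      = (∫ ω, R ω ^ 2 ∂μ) * ∫ ω, ‖∑ i, a i • g i ω‖ ^ 2 ∂μ := by
  set g' : ι → Ω → H := fun i => (hg i).mk (g i)
  have hg' : ∀ i, StronglyMeasurable (g' i) := fun i => (hg i).stronglyMeasurable_mk
  have hgg' : ∀ᵐ ω ∂μ, ∀ i, g i ω = g' i ω := ae_all_iff.2 fun i => (hg i).ae_eq_mk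
  have hY : ∀ᵐ ω ∂μ, ∑ i, a i • g i ω = ∑ i, a i • g' i ω := by
    filter_upwards [hgg'] with ω hω
    simp only [hω]
  have hindep' : IndepFun R (fun ω i => g' i ω) μ :=
    hindep.congr (ae_eq_refl _) (by filter_upwards [hgg'] with ω hω; exact funext hω)
  have hsq : IndepFun (fun ω => R ω ^ 2) (fun ω => ‖∑ i, a i • g' i ω‖ ^ 2) μ :=
    (hindep'.sum_smul_right hg' a).comp (measurable_id.pow_const 2)
      (measurable_norm.pow_const 2)
  calc ∫ ω, ‖R ω • ∑ i, a i • g i ω‖ ^ 2 ∂μ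
      = ∫ ω, R ω ^ 2 * ‖∑ i, a i • g' i ω‖ ^ 2 ∂μ := by
        refine integral_congr_ae ?_
        filter_upwards [hY] with ω hω
        simp only [hω, norm_smul, mul_pow, Real.norm_eq_abs, sq_abs]
    _ = (∫ ω, R ω ^ 2 ∂μ) * ∫ ω, ‖∑ i, a i • g' i ω‖ ^ 2 ∂μ :=
        hsq.integral_fun_mul_eq_mul_integral (by fun_prop) (by fun_prop)
    _ = (∫ ω, R ω ^ 2 ∂μ) * ∫ ω, ‖∑ i, a i • g i ω‖ ^ 2 ∂μ := by
        congr 1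
        refine integral_congr_ae ?_
        filter_upwards [hY] with ω hω
        rw [hω]

end Independence

section Orthogonality

variable {Ω ι H : Type*} {mΩ : MeasurableSpace Ω} {μ : Measure Ω} [Fintype ι]
  [NormedAddCommGroup H] [InnerProductSpace ℝ H]

lemma MeasureTheory.MemLp.integrable_inner {f g : Ω → H} (hf : MemLp f 2 μ)
    (hg : MemLp g 2 μ) : Integrable (fun ω => ⟪f ω, g ω⟫) μ := by
  refine (integrable_congr ?_).1 (L2.integrable_inner (𝕜 := ℝ) (hf.toLp f) (hg.toLp g))
  filter_upwards [hf.coeFn_toLp, hg.coeFn_toLp] with ω hfω hgω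
  rw [hfω, hgω]

lemma integral_norm_sum_sq_of_orthogonal {g : ι → Ω → H} (hg : ∀ i, MemLp (g i) 2 μ)
    (horth : ∀ i j, i ≠ j → ∫ ω, ⟪g i ω, g j ω⟫ ∂μ = 0) :
    ∫ ω, ‖∑ i, g i ω‖ ^ 2 ∂μ = ∑ i, ∫ ω, ‖g i ω‖ ^ 2 ∂μ := by
  have hint : ∀ i j, Integrable (fun ω => ⟪g i ω, g j ω⟫) μ :=
    fun i j => (hg i).integrable_inner (hg j)
  calc ∫ ω, ‖∑ i, g i ω‖ ^ 2 ∂μ = ∫ ω, ∑ i, ∑ j, ⟪g i ω, g j ω⟫ ∂μ := by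
        simp only [← real_inner_self_eq_norm_sq, sum_inner]
        simp only [inner_sum]
    _ = ∑ i, ∑ j, ∫ ω, ⟪g i ω, g j ω⟫ ∂μ := by
        rw [integral_finsetSum _ fun i _ => integrable_finsetSum _ fun j _ => hint i j]
        exact Finset.sum_congr rfl fun i _ => integral_finsetSum _ fun j _ => hint i j
    _ = ∑ i, ∫ ω, ‖g i ω‖ ^ 2 ∂μ := by
        refine Finset.sum_congr rfl fun i _ => ?_
        rw [Finset.sum_eq_single_of_mem i (Finset.mem_univ i)
          fun j _ hji => horth i j (Ne.symm hji)]
        simp only [real_inner_self_eq_norm_sq]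

lemma integral_norm_sum_smul_sq_of_orthogonal {g : ι → Ω → H} (hg : ∀ i, MemLp (g i) 2 μ)
    (horth : ∀ i j, i ≠ j → ∫ ω, ⟪g i ω, g j ω⟫ ∂μ = 0) (a : ι → ℝ) :
    ∫ ω, ‖∑ i, a i • g i ω‖ ^ 2 ∂μ = ∑ i, a i ^ 2 * ∫ ω, ‖g i ω‖ ^ 2 ∂μ := by
  have horth' : ∀ i j, i ≠ j → ∫ ω, ⟪a i • g i ω, a j • g j ω⟫ ∂μ = 0 := fun i j hij => by
    simp only [real_inner_smul_left, real_inner_smul_right, integral_const_mul, horth i j hij,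
      mul_zero]
  rw [integral_norm_sum_sq_of_orthogonal (g := fun i ω => a i • g i ω)
    (fun i => (hg i).const_smul (a i)) horth']
  simp only [norm_smul, mul_pow, Real.norm_eq_abs, sq_abs, integral_const_mul]

end Orthogonality

lemma sum_sq_mul_le_card_mul {ι : Type*} [Fintype ι] (S : Finset ι) {a c : ι → ℝ} {B : ℝ}
    (ha0 : ∀ i, 0 ≤ a i) (ha1 : ∀ i, a i ≤ 1) (haS : ∀ i ∉ S, a i = 0)
    (hc0 : ∀ i, 0 ≤ c i) (hcB : ∀ i, c i ≤ B) :
    ∑ i, a i ^ 2 * c i ≤ S.card * B :=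
  calc ∑ i, a i ^ 2 * c i = ∑ i ∈ S, a i ^ 2 * c i :=
        (Finset.sum_subset (Finset.subset_univ S) fun i _ hi => by simp [haS i hi]).symm
    _ ≤ ∑ _i ∈ S, B := Finset.sum_le_sum fun i _ =>
        (mul_le_of_le_one_left (hc0 i) (pow_le_one₀ (ha0 i) (ha1 i))).trans (hcB i)
    _ = S.card * B := by rw [Finset.sum_const, nsmul_eq_mul]

theorem stmt_2_general
    {Ω : Type*} [MeasurableSpace Ω] (μ : Measure Ω)
    {H : Type*} [NormedAddCommGroup H] [InnerProductSpace ℝ H]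
    [MeasurableSpace H] [BorelSpace H]
    (T : ℕ) (g : Fin T → Ω → H)
    (hg : ∀ t, MemLp (g t) 2 μ)
    (horth : ∀ s t, s ≠ t → ∫ ω, ⟪g s ω, g t ω⟫ ∂μ = 0)
    (G : ℝ)
    (hbound : ∀ t, ∫ ω, ‖g t ω‖ ^ 2 ∂μ ≤ G ^ 2)
    (R : Ω → ℝ) (hR : MemLp R 2 μ)
    (hindep : IndepFun R (fun ω => fun t => g t ω) μ)
    (S : Finset (Fin T)) (k : ℕ) (hk : S.card = k)
    (a : Fin T → ℝ)
    (ha0 : ∀ t, 0 ≤ a t) (ha1 : ∀ t, a t ≤ 1)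
    (haS : ∀ t ∉ S, a t = 0) :
    (∫ ω, ‖R ω • ∑ t, a t • g t ω‖ ^ 2 ∂μ)
        - ‖∫ ω, R ω • ∑ t, a t • g t ω ∂μ‖ ^ 2
      ≤ (k : ℝ) * G ^ 2 * ∫ ω, (R ω) ^ 2 ∂μ := by
  have hweights : ∑ t, a t ^ 2 * ∫ ω, ‖g t ω‖ ^ 2 ∂μ ≤ k * G ^ 2 :=
    hk ▸ sum_sq_mul_le_card_mul S ha0 ha1 haS (fun t => integral_nonneg fun ω => by positivity)
      hbound
  calc (∫ ω, ‖R ω • ∑ t, a t • g t ω‖ ^ 2 ∂μ) - ‖∫ ω, R ω • ∑ t, a t • g t ω ∂μ‖ ^ 2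
      ≤ ∫ ω, ‖R ω • ∑ t, a t • g t ω‖ ^ 2 ∂μ := sub_le_self _ (sq_nonneg _)
    _ = (∫ ω, R ω ^ 2 ∂μ) * ∑ t, a t ^ 2 * ∫ ω, ‖g t ω‖ ^ 2 ∂μ := by
        rw [integral_norm_smul_sum_sq_of_indepFun (fun t => (hg t).1) hR.1 hindep,
          integral_norm_sum_smul_sq_of_orthogonal hg horth]
    _ ≤ (∫ ω, R ω ^ 2 ∂μ) * (k * G ^ 2) :=
        mul_le_mul_of_nonneg_left hweights (integral_nonneg fun ω => sq_nonneg _)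
    _ = k * G ^ 2 * ∫ ω, R ω ^ 2 ∂μ := mul_comm _ _

/-- **Variance reduction via credit allocation (Proposition A.2).**
With `g 1, …, g T` square-integrable, pairwise L²-orthogonal random vectors with
`E[‖g t‖²] ≤ G²`, `R : Ω → ℝ` square-integrable and independent of the tuple
`(g 1, …, g T)`, and allocation weights `a t ∈ [0,1]` supported on a subset
`S ⊆ {1, …, T}` of size `k`, the allocated estimator `X := R • ∑ t, a t • g t`
has variance `Var[X] = E[‖X‖²] − ‖E[X]‖² ≤ k · G² · E[R²]`. -/
theorem stmt_2
    {Ω : Type*} [MeasurableSpace Ω] (μ : Measure Ω) [IsProbabilityMeasure μ]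
    {H : Type*} [NormedAddCommGroup H] [InnerProductSpace ℝ H]
    [MeasurableSpace H] [BorelSpace H]
    (T : ℕ) (hT : 0 < T) (g : Fin T → Ω → H)
    (hg : ∀ t, MemLp (g t) 2 μ)
    (horth : ∀ s t, s ≠ t → ∫ ω, ⟪g s ω, g t ω⟫ ∂μ = 0)
    (G : ℝ) (hG : 0 ≤ G)
    (hbound : ∀ t, ∫ ω, ‖g t ω‖ ^ 2 ∂μ ≤ G ^ 2)
    (R : Ω → ℝ) (hR : MemLp R 2 μ)
    (hindep : IndepFun R (fun ω => fun t => g t ω) μ)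
    (S : Finset (Fin T)) (k : ℕ) (hk : S.card = k)
    (a : Fin T → ℝ)
    (ha0 : ∀ t, 0 ≤ a t) (ha1 : ∀ t, a t ≤ 1)
    (haS : ∀ t ∉ S, a t = 0) :
    (∫ ω, ‖R ω • ∑ t, a t • g t ω‖ ^ 2 ∂μ)
        - ‖∫ ω, R ω • ∑ t, a t • g t ω ∂μ‖ ^ 2
      ≤ (k : ℝ) * G ^ 2 * ∫ ω, (R ω) ^ 2 ∂μ :=
  stmt_2_general μ T g hg horth G hbound R hR hindep S k hk a ha0 ha1 haS
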